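/- Let n ≥ 1 and let a₁,…,aₙ be real numbers with a₁ + ⋯ + aₙ ≥ 0. Then the number of subsets Y ⊆ {1,…,n} with ∑_{i∈Y} aᵢ ≥ 0 (counting the empty set, whose sum is 0) is at least 2^(n-1). -/

import Mathlib

/-! Since `∑_Y a + ∑_{Yᶜ} a` is the non-negative total, at least one of `Y`, `Yᶜ` is non-negative;
hence the non-negative sets together with their complements cover all `2^n` subsets. -/

open Finset

theorem sum_nonneg_or_sum_compl_nonneg {ι M : Type*} [Fintype ι] [DecidableEq ι]
    [AddCommMonoid M] [LinearOrder M] [IsOrderedCancelAddMonoid M]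
    {a : ι → M} (h : 0 ≤ ∑ i, a i) (Y : Finset ι) :
    0 ≤ ∑ i ∈ Y, a i ∨ 0 ≤ ∑ i ∈ Yᶜ, a i := by
  by_contra! hneg
  rw [← sum_add_sum_compl Y a] at h
  exact (add_neg hneg.1 hneg.2).not_ge h

theorem two_pow_card_le_two_mul_card_of_or_compl {ι : Type*} [Fintype ι] [DecidableEq ι]
    (P : Finset ι → Prop) [DecidablePred P] (hP : ∀ Y, P Y ∨ P Yᶜ) :
    2 ^ Fintype.card ι ≤ 2 * #(univ.filter P) := by
  set T := univ.filter P
  have hcover : (univ : Finset (Finset ι)) ⊆ T ∪ T.image compl := by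
    intro Y _
    rcases hP Y with hY | hY
    · exact mem_union_left _ (by simpa [T] using hY)
    · exact mem_union_right _ (mem_image.2 ⟨Yᶜ, by simpa [T] using hY, compl_compl Y⟩)
  calc 2 ^ Fintype.card ι = #(univ : Finset (Finset ι)) := by simp
    _ ≤ #(T ∪ T.image compl) := card_le_card hcover
    _ ≤ #T + #(T.image compl) := card_union_le _ _
    _ ≤ #T + #T := Nat.add_le_add_left card_image_le _
    _ = 2 * #T := (two_mul _).symm

/-- Manickam–Miklós lower bound: if `a₁ + ⋯ + aₙ ≥ 0` then at least `2^(n-1)` of the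
subsets `Y ⊆ {1,…,n}` have non-negative partial sum `∑_{i ∈ Y} aᵢ`. -/
theorem stmt0 (n : ℕ) (hn : 1 ≤ n) (a : Fin n → ℝ) (h : 0 ≤ ∑ i, a i) :
    2 ^ (n - 1) ≤ Nat.card {Y : Finset (Fin n) // 0 ≤ ∑ i ∈ Y, a i} := by
  classical
  have hcount := two_pow_card_le_two_mul_card_of_or_compl _
    (sum_nonneg_or_sum_compl_nonneg h)
  rw [Fintype.card_fin, ← Nat.two_pow_pred_mul_two hn] at hcount
  rw [Nat.card_eq_fintype_card, Fintype.card_subtype]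
  omega
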